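/- arXiv:0903.4692 — 3 statements merged into one kernel-verified Lean document; each statement's English description precedes it below -/
import Mathlib

section
/- In the setup below, the isometry τ_0 of V_+ preserves the sublattice V_0 and satisfies τ_0(w) − w ∈ V_0; consequently det(id − t·τ_0^{-1} on V_+) = (1 − t) · det(id − t·(τ_0|_{V_0})^{-1} on V_0) in ℤ[t]. -/
/-!
Each reflection `s_{e_i}` and the Eichler–Siegel transformation `ψ_{u,e}` move every vector by
an element of `V₀ = span(e_1, …, e_{n-1}, e, u)`, hence so does `τ₀`. So `τ₀` preserves `V₀` and
acts trivially on `V₊ / V₀ ≅ ℤw`: in the basis of `V₀` followed by `w`, the matrix of `τ₀⁻¹` is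
block upper triangular with diagonal blocks `(τ₀|_{V₀})⁻¹` and `1`, which gives the factor `1 - t`.
-/

/-- The reflection `s_a(v) = v + ⟨v,a⟩a` in a root `a`. -/
def sRefl {V : Type*} [AddCommGroup V] [Module ℤ V]
    (B : V →ₗ[ℤ] V →ₗ[ℤ] ℤ) (a x : V) : V :=
  x + B x a • a

/-- The Eichler–Siegel transformation
`ψ_{u,e}(x) = x + ⟨x,u⟩e − ⟨x,e⟩u − ½⟨e,e⟩⟨x,u⟩u`. -/
def esT {V : Type*} [AddCommGroup V] [Module ℤ V]
    (B : V →ₗ[ℤ] V →ₗ[ℤ] ℤ) (u e x : V) : V :=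
  x + B x u • e - B x e • u - (B e e / 2 * B x u) • u

/-- The reversed characteristic polynomial `det(id − t·f)` of an endomorphism
of a lattice with basis `b`, as an element of `ℤ[t]`. -/
noncomputable def detOneSubTPoly {ι V : Type*} [Fintype ι] [DecidableEq ι]
    [AddCommGroup V] [Module ℤ V] (b : Module.Basis ι ℤ V) (f : V →ₗ[ℤ] V) :
    Polynomial ℤ :=
  Matrix.det
    (1 - (Polynomial.X : Polynomial ℤ) •
      (LinearMap.toMatrix b b f).map (Polynomial.C : ℤ →+* Polynomial ℤ))

open Polynomial

section Moves

variable {V : Type*} [AddCommGroup V] [Module ℤ V] (B : V →ₗ[ℤ] V →ₗ[ℤ] ℤ)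
  (S : Submodule ℤ V)

theorem foldr_comp_apply_sub_mem {G : Type*} [AddGroup G] (H : AddSubgroup G)
    (l : List (G → G)) (hl : ∀ f ∈ l, ∀ x, f x - x ∈ H) (x : G) :
    l.foldr (· ∘ ·) id x - x ∈ H := by
  induction l with
  | nil => simp
  | cons f l ih =>
    rw [List.foldr_cons, Function.comp_apply, ← sub_add_sub_cancel]
    exact H.add_mem (hl f List.mem_cons_self _)
      (ih fun g hg => hl g (List.mem_cons_of_mem _ hg))

theorem sRefl_sub_mem {a : V} (ha : a ∈ S) (x : V) : sRefl B a x - x ∈ S := by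
  rw [sRefl, add_sub_cancel_left]
  exact zsmul_mem ha _

theorem esT_sub_mem {u e : V} (hu : u ∈ S) (he : e ∈ S) (x : V) : esT B u e x - x ∈ S := by
  have h : esT B u e x - x = B x u • e - B x e • u - (B e e / 2 * B x u) • u := by
    rw [esT]; abel
  rw [h]
  exact S.sub_mem (S.sub_mem (zsmul_mem he _) (zsmul_mem hu _)) (zsmul_mem hu _)

theorem foldr_sRefl_comp_esT_sub_mem {n : ℕ} {a : Fin n → V} (ha : ∀ i, a i ∈ S) {u e : V}
    (hu : u ∈ S) (he : e ∈ S) (x : V) :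
    (List.ofFn fun i => sRefl B (a i)).foldr (· ∘ ·) id (esT B u e x) - x ∈ S := by
  rw [← sub_add_sub_cancel]
  refine S.add_mem (foldr_comp_apply_sub_mem S.toAddSubgroup _ ?_ _) (esT_sub_mem B S hu he x)
  intro f hf
  obtain ⟨i, rfl⟩ := List.mem_ofFn.mp hf
  exact sRefl_sub_mem B S (ha i)

end Moves

theorem Matrix.det_one_sub_X_smul_map_fromBlocks_zero_one {R ι o : Type*} [CommRing R]
    [Fintype ι] [DecidableEq ι] [Fintype o] [DecidableEq o]
    (A : Matrix ι ι R) (C : Matrix ι o R) :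
    (1 - (X : R[X]) • (fromBlocks A C 0 (1 : Matrix o o R)).map Polynomial.C).det =
      (1 - X : R[X]) ^ Fintype.card o * (1 - (X : R[X]) • A.map Polynomial.C).det := by
  have h : 1 - (X : R[X]) • (fromBlocks A C 0 (1 : Matrix o o R)).map Polynomial.C =
      fromBlocks (1 - (X : R[X]) • A.map Polynomial.C) (-((X : R[X]) • C.map Polynomial.C))
        0 ((1 - X : R[X]) • 1) := by
    ext (i | i) (j | j) <;> simp [Matrix.one_apply, sub_smul]
  rw [h, det_fromBlocks_zero₂₁, det_smul, det_one, mul_one, mul_comm]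

section Reduction

variable {ι o κ V V₀ : Type*}
  [AddCommGroup V] [Module ℤ V] [AddCommGroup V₀] [Module ℤ V₀]

theorem detOneSubTPoly_reindex [Fintype ι] [DecidableEq ι] [Fintype κ] [DecidableEq κ]
    (b : Module.Basis ι ℤ V) (e : ι ≃ κ) (f : V →ₗ[ℤ] V) :
    detOneSubTPoly (b.reindex e) f = detOneSubTPoly b f := by
  have h : LinearMap.toMatrix (b.reindex e) (b.reindex e) f =
      Matrix.reindex e e (LinearMap.toMatrix b b f) := by
    ext i j
    simp [LinearMap.toMatrix_apply]
  rw [detOneSubTPoly, detOneSubTPoly, h, ← Matrix.det_reindex_self e]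
  congr 1
  ext i j
  simp [Matrix.one_apply]

variable {b : Module.Basis (ι ⊕ o) ℤ V} {b₀ : Module.Basis ι ℤ V₀} {incl : V₀ →ₗ[ℤ] V}

theorem repr_incl (hincl : ∀ i, incl (b₀ i) = b (.inl i)) (v : V₀) :
    b.repr (incl v) = (b₀.repr v).mapDomain Sum.inl := by
  have h : b.repr.toLinearMap ∘ₗ incl = Finsupp.lmapDomain ℤ ℤ Sum.inl ∘ₗ b₀.repr.toLinearMap :=
    b₀.ext fun i => by simp [hincl]
  exact LinearMap.congr_fun h v

theorem repr_incl_inl (hincl : ∀ i, incl (b₀ i) = b (.inl i)) (v : V₀) (i : ι) :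
    b.repr (incl v) (.inl i) = b₀.repr v i := by
  rw [repr_incl hincl, Finsupp.mapDomain_apply Sum.inl_injective]

theorem repr_incl_inr (hincl : ∀ i, incl (b₀ i) = b (.inl i)) (v : V₀) (k : o) :
    b.repr (incl v) (.inr k) = 0 := by
  rw [repr_incl hincl]
  exact Finsupp.mapDomain_of_notMem_range _ _ (by simp)

theorem toMatrix_eq_fromBlocks [Fintype ι] [DecidableEq ι] [Fintype o] [DecidableEq o]
    (hincl : ∀ i, incl (b₀ i) = b (.inl i))
    {f : V →ₗ[ℤ] V} {f₀ : V₀ →ₗ[ℤ] V₀} (hf : ∀ v, f (incl v) = incl (f₀ v))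
    (hfix : ∀ k, f (b (.inr k)) - b (.inr k) ∈ LinearMap.range incl) :
    LinearMap.toMatrix b b f = Matrix.fromBlocks (LinearMap.toMatrix b₀ b₀ f₀)
      (LinearMap.toMatrix b b f).toBlocks₁₂ 0 1 := by
  conv_lhs => rw [← Matrix.fromBlocks_toBlocks (LinearMap.toMatrix b b f)]
  congr 1 <;> ext k j
  · rw [Matrix.toBlocks₁₁, Matrix.of_apply, LinearMap.toMatrix_apply, LinearMap.toMatrix_apply,
      ← hincl, hf, repr_incl_inl hincl]
  · rw [Matrix.toBlocks₂₁, Matrix.of_apply, LinearMap.toMatrix_apply, ← hincl, hf,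
      repr_incl_inr hincl, Matrix.zero_apply]
  · obtain ⟨z, hz⟩ := hfix j
    rw [Matrix.toBlocks₂₂, Matrix.of_apply, LinearMap.toMatrix_apply, ← sub_add_cancel
      (f (b (.inr j))) (b (.inr j)), ← hz, map_add, Finsupp.add_apply, repr_incl_inr hincl,
      zero_add, b.repr_self, Finsupp.single_apply, Matrix.one_apply]
    simp only [Sum.inr.injEq, eq_comm]

theorem detOneSubTPoly_eq_one_sub_X_pow_mul [Fintype ι] [DecidableEq ι] [Fintype o]
    [DecidableEq o] (hincl : ∀ i, incl (b₀ i) = b (.inl i))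
    {f : V →ₗ[ℤ] V} {f₀ : V₀ →ₗ[ℤ] V₀} (hf : ∀ v, f (incl v) = incl (f₀ v))
    (hfix : ∀ k, f (b (.inr k)) - b (.inr k) ∈ LinearMap.range incl) :
    detOneSubTPoly b f = (1 - X : ℤ[X]) ^ Fintype.card o * detOneSubTPoly b₀ f₀ := by
  rw [detOneSubTPoly, toMatrix_eq_fromBlocks hincl hf hfix,
    Matrix.det_one_sub_X_smul_map_fromBlocks_zero_one, detOneSubTPoly]

end Reduction

section Restriction

variable {V V₀ : Type*} [AddCommGroup V] [Module ℤ V] [AddCommGroup V₀] [Module ℤ V₀]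
  {incl : V₀ →ₗ[ℤ] V} {τ : V ≃ₗ[ℤ] V} {τ₀ : V₀ ≃ₗ[ℤ] V₀}

theorem inv_apply_incl (h : ∀ v, incl (τ₀ v) = τ (incl v)) (v : V₀) :
    τ⁻¹ (incl v) = incl (τ₀⁻¹ v) := by
  rw [LinearEquiv.coe_inv, LinearEquiv.symm_apply_eq, ← h, LinearEquiv.coe_inv,
    LinearEquiv.apply_symm_apply]

theorem inv_apply_sub_mem_range (h : ∀ v, incl (τ₀ v) = τ (incl v)) {x : V}
    (hx : τ x - x ∈ LinearMap.range incl) : τ⁻¹ x - x ∈ LinearMap.range incl := by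
  obtain ⟨z, hz⟩ := hx
  refine ⟨-τ₀⁻¹ z, ?_⟩
  rw [map_neg, ← inv_apply_incl h, hz, map_sub, LinearEquiv.coe_inv,
    LinearEquiv.symm_apply_apply, neg_sub]

end Restriction

theorem stmt8_general {Vp V0 : Type*} [AddCommGroup Vp] [Module ℤ Vp]
    [AddCommGroup V0] [Module ℤ V0]
    (m : ℕ)
    (bp : Module.Basis ((Fin m ⊕ Unit) ⊕ Fin 2) ℤ Vp)
    (b0 : Module.Basis ((Fin m ⊕ Unit) ⊕ Unit) ℤ V0)
    (B : Vp →ₗ[ℤ] Vp →ₗ[ℤ] ℤ)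
    -- the inclusion `ι : V₀ → V₊`, basis to basis, `u ↦ u`
    (incl : V0 →ₗ[ℤ] Vp)
    (hincl1 : ∀ j : Fin m ⊕ Unit, incl (b0 (.inl j)) = bp (.inl j))
    (hincl2 : incl (b0 (.inr ())) = bp (.inr 0))
    -- `τ₀ = s_{e_1} ∘ ⋯ ∘ s_{e_m} ∘ ψ_{u,e}` on `V₊`
    (τ0 : Vp ≃ₗ[ℤ] Vp)
    (hτ0 : ∀ x, τ0 x =
      ((List.ofFn fun i : Fin m => sRefl B (bp (.inl (.inl i)))).foldr (· ∘ ·) id)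
        (esT B (bp (.inr 0)) (bp (.inl (.inr ()))) x))
    -- the restriction `τ₀|_{V₀}`
    (τ00 : V0 ≃ₗ[ℤ] V0)
    (hτ00 : ∀ x : V0, incl (τ00 x) = τ0 (incl x)) :
    (∀ x : V0, τ0 (incl x) ∈ LinearMap.range incl) ∧
    (τ0 (bp (.inr 1)) - bp (.inr 1) ∈ LinearMap.range incl) ∧
    detOneSubTPoly bp (τ0⁻¹ : Vp ≃ₗ[ℤ] Vp).toLinearMap
      = (1 - Polynomial.X) *
        detOneSubTPoly b0 (τ00⁻¹ : V0 ≃ₗ[ℤ] V0).toLinearMap := by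
  have hmove : ∀ x, τ0 x - x ∈ LinearMap.range incl := fun x => by
    rw [hτ0]
    exact foldr_sRefl_comp_esT_sub_mem B _ (fun i => hincl1 (.inl i) ▸ incl.mem_range_self _)
      (hincl2 ▸ incl.mem_range_self _) (hincl1 (.inr ()) ▸ incl.mem_range_self _) x
  refine ⟨fun x => ⟨τ00 x, hτ00 x⟩, hmove _, ?_⟩
  -- `φ` lists the basis of `V₊` as that of `V₀` followed by `w`
  let φ : ((Fin m ⊕ Unit) ⊕ Unit) ⊕ Unit ≃ (Fin m ⊕ Unit) ⊕ Fin 2 :=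
    (Equiv.sumAssoc _ _ _).trans
      (Equiv.sumCongr (Equiv.refl _) (finTwoEquiv.trans Equiv.boolEquivPUnitSumPUnit).symm)
  rw [← detOneSubTPoly_reindex bp φ.symm, detOneSubTPoly_eq_one_sub_X_pow_mul ?_
    (inv_apply_incl hτ00) fun _ => inv_apply_sub_mem_range hτ00 (hmove _), Fintype.card_unit,
    pow_one]
  rintro (j | ⟨⟨⟩⟩) <;> rw [Module.Basis.reindex_apply]
  · exact hincl1 j
  · exact hincl2

/-- with `V₋` an even lattice with basis `e_1, …, e_m, e` (the `e_i`
roots), `V₀ = V₋ ⊕ ℤu` and `V₊ = V₋ ⊕ U` (`U` hyperbolic with basis `u, w`), and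
`τ₀ = s_{e_1} ∘ ⋯ ∘ s_{e_m} ∘ ψ_{u,e}`: the isometry `τ₀` of `V₊` preserves the
sublattice `V₀` (the image of the inclusion `ι`), `τ₀(w) − w ∈ V₀`, and
`det(id − t·τ₀⁻¹ on V₊) = (1 − t) · det(id − t·(τ₀|_{V₀})⁻¹ on V₀)` in `ℤ[t]`. -/
theorem stmt8 {Vp V0 : Type*} [AddCommGroup Vp] [Module ℤ Vp]
    [AddCommGroup V0] [Module ℤ V0]
    (m : ℕ)
    (bp : Module.Basis ((Fin m ⊕ Unit) ⊕ Fin 2) ℤ Vp)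
    (b0 : Module.Basis ((Fin m ⊕ Unit) ⊕ Unit) ℤ V0)
    (B : Vp →ₗ[ℤ] Vp →ₗ[ℤ] ℤ)
    (hsymm : ∀ x y, B x y = B y x)
    (heven : ∀ x, Even (B x x))
    -- the `e_i` are roots
    (hroot : ∀ i : Fin m, B (bp (.inl (.inl i))) (bp (.inl (.inl i))) = -2)
    -- `u, w` span a hyperbolic plane orthogonal to `V₋`
    (huu : B (bp (.inr 0)) (bp (.inr 0)) = 0)
    (hww : B (bp (.inr 1)) (bp (.inr 1)) = 0)
    (huw : B (bp (.inr 0)) (bp (.inr 1)) = 1)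
    (horth : ∀ (j : Fin m ⊕ Unit) (k : Fin 2), B (bp (.inl j)) (bp (.inr k)) = 0)
    -- the inclusion `ι : V₀ → V₊`, basis to basis, `u ↦ u`
    (incl : V0 →ₗ[ℤ] Vp)
    (hincl1 : ∀ j : Fin m ⊕ Unit, incl (b0 (.inl j)) = bp (.inl j))
    (hincl2 : incl (b0 (.inr ())) = bp (.inr 0))
    -- `τ₀ = s_{e_1} ∘ ⋯ ∘ s_{e_m} ∘ ψ_{u,e}` on `V₊`
    (τ0 : Vp ≃ₗ[ℤ] Vp)
    (hτ0 : ∀ x, τ0 x =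
      ((List.ofFn fun i : Fin m => sRefl B (bp (.inl (.inl i)))).foldr (· ∘ ·) id)
        (esT B (bp (.inr 0)) (bp (.inl (.inr ()))) x))
    -- the restriction `τ₀|_{V₀}`
    (τ00 : V0 ≃ₗ[ℤ] V0)
    (hτ00 : ∀ x : V0, incl (τ00 x) = τ0 (incl x)) :
    (∀ x : V0, τ0 (incl x) ∈ LinearMap.range incl) ∧
    (τ0 (bp (.inr 1)) - bp (.inr 1) ∈ LinearMap.range incl) ∧
    detOneSubTPoly bp (τ0⁻¹ : Vp ≃ₗ[ℤ] Vp).toLinearMap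
      = (1 - Polynomial.X) *
        detOneSubTPoly b0 (τ00⁻¹ : V0 ≃ₗ[ℤ] V0).toLinearMap :=
  stmt8_general m bp b0 B incl hincl1 hincl2 τ0 hτ0 τ00 hτ00
end

section
/- In the setup below, for every integer k ≥ 1 one has ⟨u − w, τ_0^k(u − w) − τ_0^{k−1}(u − w)⟩ = ½⟨e,e⟩ − ⟨u − w, τ_0^k(e)⟩. -/
/-!
Since `τ₀` fixes `u` and the reflections fix everything orthogonal to the roots, a direct
computation gives `τ₀(u − w + e) = (u − w) − ½⟨e,e⟩ u` (evenness makes `⟨e,e⟩ − ½⟨e,e⟩ = ½⟨e,e⟩`).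
Applying `τ₀^(k−1)` yields `τ₀^k(u − w) − τ₀^(k−1)(u − w) = −½⟨e,e⟩ u − τ₀^k(e)`, and pairing with
`u − w`, where `⟨u − w, u⟩ = −1`, gives the claim.
-/

theorem Function.IsFixedPt.foldr_comp {α : Type*} {fs : List (α → α)} {x : α}
    (h : ∀ f ∈ fs, Function.IsFixedPt f x) : Function.IsFixedPt (fs.foldr (· ∘ ·) id) x := by
  induction fs with
  | nil => rfl
  | cons f fs ih =>
    exact (h f List.mem_cons_self).comp (ih fun g hg => h g (List.mem_cons_of_mem f hg))

theorem LinearEquiv.pow_succ_apply_sub_pow_apply {R M : Type*} [Semiring R] [AddCommGroup M]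
    [Module R M] (τ : M ≃ₗ[R] M) {v e x : M} (hx : τ x = x) (hτ : τ (v + e) = v + x) (n : ℕ) :
    (τ ^ (n + 1)) v - (τ ^ n) v = x - (τ ^ (n + 1)) e := by
  have hτv : τ v = v + x - τ e := by rw [← hτ, map_add, add_sub_cancel_right]
  have hpow : (τ ^ n) x = x := by
    rw [LinearEquiv.coe_pow]
    exact Function.IsFixedPt.iterate hx n
  rw [pow_succ, LinearEquiv.mul_apply, LinearEquiv.mul_apply, hτv, map_sub, map_add, hpow]
  abel

section EvenLattice

variable {V : Type*} [AddCommGroup V] [Module ℤ V] (B : V →ₗ[ℤ] V →ₗ[ℤ] ℤ)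

theorem isFixedPt_sRefl {a x : V} (h : B x a = 0) : Function.IsFixedPt (sRefl B a) x := by
  simp [Function.IsFixedPt, sRefl, h]

theorem esT_apply_self {u e : V} (huu : B u u = 0) (hue : B u e = 0) : esT B u e u = u := by
  simp [esT, huu, hue]

theorem esT_apply_sub_add {u w e : V} (huu : B u u = 0) (hue : B u e = 0) (heu : B e u = 0)
    (hwu : B w u = 1) (hwe : B w e = 0) (heven : Even (B e e)) :
    esT B u e (u - w + e) = u - w + (-(B e e / 2)) • u := by
  have hsplit : B e e • u = (B e e / 2) • u + (B e e / 2) • u := by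
    rw [← add_zsmul]
    obtain ⟨r, hr⟩ := heven
    congr 1
    omega
  simp only [esT, map_add, map_sub, LinearMap.add_apply, LinearMap.sub_apply, huu, hue, heu, hwu,
    hwe, zero_sub, sub_zero, add_zero, zero_add, hsplit, mul_neg, mul_one, neg_zsmul, one_zsmul]
  abel

theorem foldr_sRefl_apply_of_orthogonal {m : ℕ} (a : Fin m → V) {x : V}
    (hx : ∀ i, B x (a i) = 0) :
    ((List.ofFn fun i => sRefl B (a i)).foldr (· ∘ ·) id) x = x := by
  refine Function.IsFixedPt.foldr_comp fun f hf => ?_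
  obtain ⟨i, rfl⟩ := List.mem_ofFn.mp hf
  exact isFixedPt_sRefl B (hx i)

end EvenLattice

theorem stmt9_general {Vp : Type*} [AddCommGroup Vp] [Module ℤ Vp]
    (m : ℕ)
    (bp : Module.Basis ((Fin m ⊕ Unit) ⊕ Fin 2) ℤ Vp)
    (B : Vp →ₗ[ℤ] Vp →ₗ[ℤ] ℤ)
    (hsymm : ∀ x y, B x y = B y x)
    (heven : ∀ x, Even (B x x))
    (huu : B (bp (.inr 0)) (bp (.inr 0)) = 0)
    (huw : B (bp (.inr 0)) (bp (.inr 1)) = 1)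
    (horth : ∀ (j : Fin m ⊕ Unit) (k : Fin 2), B (bp (.inl j)) (bp (.inr k)) = 0)
    (τ0 : Vp ≃ₗ[ℤ] Vp)
    (hτ0 : ∀ x, τ0 x =
      ((List.ofFn fun i : Fin m => sRefl B (bp (.inl (.inl i)))).foldr (· ∘ ·) id)
        (esT B (bp (.inr 0)) (bp (.inl (.inr ()))) x)) :
    ∀ k : ℕ, 1 ≤ k →
      B (bp (.inr 0) - bp (.inr 1))
        ((τ0 ^ k) (bp (.inr 0) - bp (.inr 1)) -
          (τ0 ^ (k - 1)) (bp (.inr 0) - bp (.inr 1)))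
        = B (bp (.inl (.inr ()))) (bp (.inl (.inr ()))) / 2 -
            B (bp (.inr 0) - bp (.inr 1)) ((τ0 ^ k) (bp (.inl (.inr ())))) := by
  set u := bp (.inr 0)
  set w := bp (.inr 1)
  set e := bp (.inl (.inr ()))
  have hue : B u e = 0 := by rw [hsymm]; exact horth _ _
  have hwe : B w e = 0 := by rw [hsymm]; exact horth _ _
  have hu_perp : ∀ i, B u (bp (.inl (.inl i))) = 0 := fun i => by rw [hsymm]; exact horth _ _
  have hw_perp : ∀ i, B w (bp (.inl (.inl i))) = 0 := fun i => by rw [hsymm]; exact horth _ _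
  have hτu : τ0 u = u := by
    rw [hτ0, esT_apply_self B huu hue]
    exact foldr_sRefl_apply_of_orthogonal B _ hu_perp
  have hτ : τ0 (u - w + e) = u - w + (-(B e e / 2)) • u := by
    rw [hτ0, esT_apply_sub_add B huu hue (horth _ _) (by rw [hsymm, huw]) hwe (heven e)]
    refine foldr_sRefl_apply_of_orthogonal B _ fun i => ?_
    simp [hu_perp, hw_perp]
  have hpair : B (u - w) u = -1 := by simp [huu, hsymm w u, huw]
  intro k hk
  obtain ⟨n, rfl⟩ := Nat.exists_eq_add_of_le' hk
  rw [Nat.add_sub_cancel, τ0.pow_succ_apply_sub_pow_apply (by rw [map_zsmul, hτu]) hτ n,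
    map_sub, map_zsmul, hpair]
  simp

/-- with `V₋` an even lattice with basis `e_1, …, e_m, e` (the `e_i`
roots), `V₊ = V₋ ⊕ U` (`U` hyperbolic with basis `u, w`) and
`τ₀ = s_{e_1} ∘ ⋯ ∘ s_{e_m} ∘ ψ_{u,e}`, for every `k ≥ 1`:
`⟨u − w, τ₀^k(u − w) − τ₀^{k−1}(u − w)⟩ = ½⟨e,e⟩ − ⟨u − w, τ₀^k(e)⟩`. -/
theorem stmt9 {Vp : Type*} [AddCommGroup Vp] [Module ℤ Vp]
    (m : ℕ)
    (bp : Module.Basis ((Fin m ⊕ Unit) ⊕ Fin 2) ℤ Vp)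
    (B : Vp →ₗ[ℤ] Vp →ₗ[ℤ] ℤ)
    (hsymm : ∀ x y, B x y = B y x)
    (heven : ∀ x, Even (B x x))
    (hroot : ∀ i : Fin m, B (bp (.inl (.inl i))) (bp (.inl (.inl i))) = -2)
    (huu : B (bp (.inr 0)) (bp (.inr 0)) = 0)
    (hww : B (bp (.inr 1)) (bp (.inr 1)) = 0)
    (huw : B (bp (.inr 0)) (bp (.inr 1)) = 1)
    (horth : ∀ (j : Fin m ⊕ Unit) (k : Fin 2), B (bp (.inl j)) (bp (.inr k)) = 0)
    (τ0 : Vp ≃ₗ[ℤ] Vp)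
    (hτ0 : ∀ x, τ0 x =
      ((List.ofFn fun i : Fin m => sRefl B (bp (.inl (.inl i)))).foldr (· ∘ ·) id)
        (esT B (bp (.inr 0)) (bp (.inl (.inr ()))) x)) :
    ∀ k : ℕ, 1 ≤ k →
      B (bp (.inr 0) - bp (.inr 1))
        ((τ0 ^ k) (bp (.inr 0) - bp (.inr 1)) -
          (τ0 ^ (k - 1)) (bp (.inr 0) - bp (.inr 1)))
        = B (bp (.inl (.inr ()))) (bp (.inl (.inr ()))) / 2 -
            B (bp (.inr 0) - bp (.inr 1)) ((τ0 ^ k) (bp (.inl (.inr ())))) :=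
  stmt9_general m bp B hsymm heven huu huw horth τ0 hτ0
end

section
/- In the setup below, for every integer k ≥ 0 one has ⟨τ_0^k(e), u − w⟩ = Σ_{ℓ=0}^{k−1} ⟨e, τ_0^ℓ(e)⟩ (the empty sum for k = 0 being 0). -/
/-!
Since `e` and the roots `e_i` are orthogonal to `U`, the reflections `s_{e_i}` do not change the
pairing with `u` or `w`, and `ψ_{u,e}` fixes the pairing with `u`. Hence `⟨τ₀^ℓ e, u⟩ = ⟨e, u⟩ = 0`
for all `ℓ`, and for `x` orthogonal to `u` the formula for `ψ_{u,e}` gives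
`⟨τ₀ x, u − w⟩ = ⟨x, u − w⟩ + ⟨x, e⟩`. The claim is the telescoped sum of these increments along
the orbit of `e`, starting from `⟨e, u − w⟩ = 0`.
-/

theorem List.comp_foldr_comp_id {α β : Type*} (φ : α → β) (l : List (α → α))
    (h : ∀ f ∈ l, φ ∘ f = φ) : φ ∘ l.foldr (· ∘ ·) id = φ := by
  induction l with
  | nil => rfl
  | cons f t ih =>
    rw [List.foldr_cons, ← Function.comp_assoc,
      h f List.mem_cons_self, ih fun g hg => h g (List.mem_cons_of_mem _ hg)]

section Pairing

variable {V : Type*} [AddCommGroup V] [Module ℤ V] (B : V →ₗ[ℤ] V →ₗ[ℤ] ℤ)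

theorem sRefl_pairing_of_orthogonal {a z : V} (h : B a z = 0) (y : V) :
    B (sRefl B a y) z = B y z := by
  simp [sRefl, h]

theorem foldr_sRefl_pairing_of_orthogonal {n : ℕ} (a : Fin n → V) {z : V}
    (h : ∀ i, B (a i) z = 0) (y : V) :
    B (((List.ofFn fun i => sRefl B (a i)).foldr (· ∘ ·) id) y) z = B y z := by
  refine congrFun (List.comp_foldr_comp_id (fun y => B y z) _ ?_) y
  intro f hf
  obtain ⟨i, rfl⟩ := List.mem_ofFn.mp hf
  exact funext (sRefl_pairing_of_orthogonal B (h i))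

theorem esT_pairing (u e x z : V) :
    B (esT B u e x) z = B x z + B x u * B e z - B x e * B u z - B e e / 2 * B x u * B u z := by
  simp [esT, mul_assoc]

end Pairing

theorem stmt10_general {Vp : Type*} [AddCommGroup Vp] [Module ℤ Vp]
    (m : ℕ)
    (bp : Module.Basis ((Fin m ⊕ Unit) ⊕ Fin 2) ℤ Vp)
    (B : Vp →ₗ[ℤ] Vp →ₗ[ℤ] ℤ)
    (hsymm : ∀ x y, B x y = B y x)
    (huu : B (bp (.inr 0)) (bp (.inr 0)) = 0)
    (huw : B (bp (.inr 0)) (bp (.inr 1)) = 1)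
    (horth : ∀ (j : Fin m ⊕ Unit) (k : Fin 2), B (bp (.inl j)) (bp (.inr k)) = 0)
    (τ0 : Vp ≃ₗ[ℤ] Vp)
    (hτ0 : ∀ x, τ0 x =
      ((List.ofFn fun i : Fin m => sRefl B (bp (.inl (.inl i)))).foldr (· ∘ ·) id)
        (esT B (bp (.inr 0)) (bp (.inl (.inr ()))) x)) :
    ∀ k : ℕ,
      B ((τ0 ^ k) (bp (.inl (.inr ())))) (bp (.inr 0) - bp (.inr 1))
        = ∑ ℓ ∈ Finset.range k,
            B (bp (.inl (.inr ()))) ((τ0 ^ ℓ) (bp (.inl (.inr ())))) := by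
  set u := bp (.inr 0)
  set w := bp (.inr 1)
  set e := bp (.inl (.inr ()))
  have heu : B e u = 0 := horth (.inr ()) 0
  have hew : B e w = 0 := horth (.inr ()) 1
  have hτ0_pairing (z : Vp) (hz : ∀ j, B (bp (.inl j)) z = 0) (x : Vp) :
      B (τ0 x) z = B (esT B u e x) z := by
    rw [hτ0, foldr_sRefl_pairing_of_orthogonal B _ (fun i => hz (.inl i))]
  have horbit_u (n : ℕ) : B ((τ0 ^ n) e) u = 0 := by
    induction n with
    | zero => exact heu
    | succ n ih =>
      rw [pow_succ', LinearEquiv.mul_apply, hτ0_pairing u (horth · 0), esT_pairing, ih, huu]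
      ring
  have hincrement (n : ℕ) :
      B ((τ0 ^ (n + 1)) e) (u - w) - B ((τ0 ^ n) e) (u - w) = B e ((τ0 ^ n) e) := by
    rw [pow_succ', LinearEquiv.mul_apply,
      hτ0_pairing (u - w) (fun j => by simp [u, w, horth j 0, horth j 1]), esT_pairing, horbit_u,
      hsymm _ e]
    simp [heu, hew, huu, huw]
  intro k
  calc B ((τ0 ^ k) e) (u - w) = B ((τ0 ^ k) e) (u - w) - B ((τ0 ^ 0) e) (u - w) := by
        simp [heu, hew]
    _ = ∑ n ∈ Finset.range k, (B ((τ0 ^ (n + 1)) e) (u - w) - B ((τ0 ^ n) e) (u - w)) :=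
        (Finset.sum_range_sub (fun n => B ((τ0 ^ n) e) (u - w)) k).symm
    _ = ∑ n ∈ Finset.range k, B e ((τ0 ^ n) e) := Finset.sum_congr rfl fun n _ => hincrement n

/-- with `V₋` an even lattice with basis `e_1, …, e_m, e` (the `e_i`
roots), `V₊ = V₋ ⊕ U` (`U` hyperbolic with basis `u, w`) and
`τ₀ = s_{e_1} ∘ ⋯ ∘ s_{e_m} ∘ ψ_{u,e}`, for every `k ≥ 0`:
`⟨τ₀^k(e), u − w⟩ = Σ_{ℓ=0}^{k−1} ⟨e, τ₀^ℓ(e)⟩`. -/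
theorem stmt10 {Vp : Type*} [AddCommGroup Vp] [Module ℤ Vp]
    (m : ℕ)
    (bp : Module.Basis ((Fin m ⊕ Unit) ⊕ Fin 2) ℤ Vp)
    (B : Vp →ₗ[ℤ] Vp →ₗ[ℤ] ℤ)
    (hsymm : ∀ x y, B x y = B y x)
    (heven : ∀ x, Even (B x x))
    (hroot : ∀ i : Fin m, B (bp (.inl (.inl i))) (bp (.inl (.inl i))) = -2)
    (huu : B (bp (.inr 0)) (bp (.inr 0)) = 0)
    (hww : B (bp (.inr 1)) (bp (.inr 1)) = 0)
    (huw : B (bp (.inr 0)) (bp (.inr 1)) = 1)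
    (horth : ∀ (j : Fin m ⊕ Unit) (k : Fin 2), B (bp (.inl j)) (bp (.inr k)) = 0)
    (τ0 : Vp ≃ₗ[ℤ] Vp)
    (hτ0 : ∀ x, τ0 x =
      ((List.ofFn fun i : Fin m => sRefl B (bp (.inl (.inl i)))).foldr (· ∘ ·) id)
        (esT B (bp (.inr 0)) (bp (.inl (.inr ()))) x)) :
    ∀ k : ℕ,
      B ((τ0 ^ k) (bp (.inl (.inr ())))) (bp (.inr 0) - bp (.inr 1))
        = ∑ ℓ ∈ Finset.range k,
            B (bp (.inl (.inr ()))) ((τ0 ^ ℓ) (bp (.inl (.inr ())))) :=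
  stmt10_general m bp B hsymm huu huw horth τ0 hτ0
end
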